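/- Let G = (V,E) be a finite simple graph with maximum degree at most 2 and n ≥ 1 an integer. Then C(I_n(G)) ≤ 2(n − 1). -/

import Mathlib

namespace PaperKL

open Finset

variable {V : Type*}

section Complexes
variable [DecidableEq V]

/-- A (finite) abstract simplicial complex: a family of finite sets closed under
taking subsets. -/
def IsSimplicialComplex (X : Finset (Finset V)) : Prop :=
  ∀ σ ∈ X, ∀ τ ⊆ σ, τ ∈ X

/-- `σ` is a free face of `X`, with `τ` the unique maximal face of `X` containing it:
equivalently, every face of `X` containing `σ` is contained in `τ`. -/
def IsFreeFace (X : Finset (Finset V)) (σ τ : Finset V) : Prop :=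
  σ ∈ X ∧ τ ∈ X ∧ σ ⊆ τ ∧ ∀ η ∈ X, σ ⊆ η → η ⊆ τ

/-- `Y` is obtained from `X` by an elementary `d`-collapse. -/
def ElemCollapse (d : ℕ) (X Y : Finset (Finset V)) : Prop :=
  ∃ σ τ : Finset V, IsFreeFace X σ τ ∧ σ.card ≤ d ∧
    Y = X.filter fun η => ¬(σ ⊆ η ∧ η ⊆ τ)

/-- `X` is `d`-collapsible: some sequence of elementary `d`-collapses reduces `X`
to the void complex `∅`. -/
def Collapsible (d : ℕ) (X : Finset (Finset V)) : Prop :=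
  Relation.ReflTransGen (ElemCollapse d) X ∅

/-- The collapsibility number `C(X)`: the minimum `d` such that `X` is `d`-collapsible. -/
noncomputable def collapseNum (X : Finset (Finset V)) : ℕ :=
  sInf {d | Collapsible d X}

/-- The link `lk(X, τ) = {η ∈ X : η ∩ τ = ∅, η ∪ τ ∈ X}`. -/
def link (X : Finset (Finset V)) (τ : Finset V) : Finset (Finset V) :=
  X.filter fun η => η ∩ τ = ∅ ∧ η ∪ τ ∈ X

/-- Deletion of a vertex: `X \ v`. -/
def deleteVert (X : Finset (Finset V)) (v : V) : Finset (Finset V) :=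
  X.filter fun σ => v ∉ σ

/-- The induced subcomplex on the complement of `S`: `X[V \ S]`. -/
def deleteSet (X : Finset (Finset V)) (S : Finset V) : Finset (Finset V) :=
  X.filter fun σ => σ ∩ S = ∅

/-- The vertex set of a complex: the union of its faces. -/
def vertexSet (X : Finset (Finset V)) : Finset V := X.sup id

/-- The join `X ∗ Y = {σ ∪ τ : σ ∈ X, τ ∈ Y}`. -/
def joinSC (X Y : Finset (Finset V)) : Finset (Finset V) :=
  (X ×ˢ Y).image fun p => p.1 ∪ p.2

/-- `τ` is a maximal face of `X`. -/
def IsMaximalFace (X : Finset (Finset V)) (τ : Finset V) : Prop :=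
  τ ∈ X ∧ ∀ η ∈ X, τ ⊆ η → η = τ

/-- `X` is a cone over `v`: every maximal face of `X` contains `v`. -/
def IsConeOver (X : Finset (Finset V)) (v : V) : Prop :=
  ∀ τ, IsMaximalFace X τ → v ∈ τ

/-- A missing face of `X`: a subset of the vertex set which is not a face,
all of whose proper subsets are faces. -/
def IsMissingFace (X : Finset (Finset V)) (τ : Finset V) : Prop :=
  τ ⊆ vertexSet X ∧ τ ∉ X ∧ ∀ σ ⊂ τ, σ ∈ X

end Complexes

/-- A finset is an independent set in the graph `G`. -/
def IsIndepSet (G : SimpleGraph V) (s : Finset V) : Prop :=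
  ∀ u ∈ s, ∀ v ∈ s, ¬ G.Adj u v

section Graphs
variable [DecidableEq V]

/-- The complex `I_n(G[W])` of the induced subgraph `G[W]`, realized as the family of
subsets `U ⊆ W` such that `U` contains no independent set of `G` of size `n`. -/
noncomputable def indComplexOn (G : SimpleGraph V) (W : Finset V) (n : ℕ) :
    Finset (Finset V) :=
  @Finset.filter _ (fun U => ¬ ∃ I ⊆ U, I.card = n ∧ IsIndepSet G I)
    (Classical.decPred _) W.powerset

variable [Fintype V]

/-- The complex `I_n(G)`: subsets of `V` containing no independent set of size `n`. -/
noncomputable def indComplex (G : SimpleGraph V) (n : ℕ) : Finset (Finset V) :=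
  indComplexOn G Finset.univ n

/-- The open neighborhood of `v` as a finset. -/
noncomputable def nbrsFinset (G : SimpleGraph V) (v : V) : Finset V :=
  @Finset.filter _ (fun u => G.Adj v u) (Classical.decPred _) Finset.univ

/-- Filter of a finset by an arbitrary predicate (classical decidability). -/
noncomputable def cfilter (p : V → Prop) (s : Finset V) : Finset V :=
  @Finset.filter _ p (Classical.decPred _) s

end Graphs

/-- `G` has maximum degree at most `Δ`. -/
def MaxDegLE (G : SimpleGraph V) (Δ : ℕ) : Prop :=
  ∀ v : V, (G.neighborSet v).ncard ≤ Δ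

/-- `G` is claw-free: it has no induced subgraph isomorphic to `K_{1,3}`. -/
def ClawFree (G : SimpleGraph V) : Prop :=
  ¬ ∃ a b c d : V, b ≠ c ∧ b ≠ d ∧ c ≠ d ∧
    G.Adj a b ∧ G.Adj a c ∧ G.Adj a d ∧ ¬G.Adj b c ∧ ¬G.Adj b d ∧ ¬G.Adj c d

/-- `G` is chordal: it has no induced cycle of length at least 4. -/
def IsChordal (G : SimpleGraph V) : Prop :=
  ∀ m : ℕ, 4 ≤ m → ¬ ∃ f : ZMod m → V, Function.Injective f ∧
    ∀ i j : ZMod m, G.Adj (f i) (f j) ↔ (j = i + 1 ∨ i = j + 1)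

/-- `v` is a simplicial vertex of `G`: its closed neighborhood is a clique. -/
def IsSimplicialVertex (G : SimpleGraph V) (v : V) : Prop :=
  ∀ a b : V, G.Adj v a → G.Adj v b → a ≠ b → G.Adj a b

/-- The connected component of `v` in `G` is a path: its vertices can be enumerated
as `f 0, …, f m` with adjacency exactly between consecutive vertices. -/
def InPathComponent (G : SimpleGraph V) (v : V) : Prop :=
  ∃ (m : ℕ) (f : Fin (m + 1) → V), Function.Injective f ∧
    (∀ w, G.Reachable v w ↔ ∃ i, f i = w) ∧
    (∀ i j : Fin (m + 1), G.Adj (f i) (f j) ↔ ((i : ℕ) + 1 = (j : ℕ) ∨ (j : ℕ) + 1 = (i : ℕ)))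

/-- The collection `A 0, …, A (t-1)` of independent sets of `G` admits a rainbow
independent set of size `n`: there are indices `g 0 < ⋯ < g (n-1)` and distinct
vertices `a j ∈ A (g j)` forming an independent set of `G`. -/
def HasRainbowIndepSet [DecidableEq V] (G : SimpleGraph V) (n : ℕ) {t : ℕ} (A : Fin t → Finset V) : Prop :=
  ∃ (g : Fin n → Fin t) (a : Fin n → V), StrictMono g ∧ Function.Injective a ∧
    (∀ j, a j ∈ A (g j)) ∧ IsIndepSet G (Finset.image a Finset.univ)

section FGraphs
variable [DecidableEq V] [Fintype V]

/-- `f_G(n)`: the minimum `t` such that every collection of `t` independent sets of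
size `n` in `G` has a rainbow independent set of size `n`. -/
noncomputable def fRainbow (G : SimpleGraph V) (n : ℕ) : ℕ :=
  sInf {t | ∀ A : Fin t → Finset V,
    (∀ i, IsIndepSet G (A i) ∧ (A i).card = n) → HasRainbowIndepSet G n A}

/-- The independence number `α(G)`. -/
noncomputable def indepNum (G : SimpleGraph V) : ℕ :=
  (@Finset.filter _ (fun s => IsIndepSet G s) (Classical.decPred _)
    (Finset.univ : Finset V).powerset).sup Finset.card

end FGraphs

/-!
A complex `X` is `(d+1)`-collapsible when its link at a vertex `v` is `d`-collapsible and its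
deletion of `v` is `(d+1)`-collapsible, and a cone over `v` is as collapsible as its base. The
link of `v` in `I_{m+1}(G[W])` is the relative complex `indComplexRel G (W - v) m N(v)` of sets
`η` with no independent `(m+1)`-set and no independent `m`-set in `η \ N(v)`. For maximum
degree `2` the exceptional set has at most two vertices in `W`, each with at most one neighbour
in `W`. Splitting a relative complex at an exceptional vertex `x` gives a cone when the other
exceptional vertex `y` is a neighbour of `x`; otherwise the link of `x`, split once more at `y`,
has deletion `I_{m+1}` and link a relative complex one level down with exceptional set
`N(x) ∪ N(y)`, of the same shape. A joint induction on `m` and `W` gives the bound `2m` for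
`I_{m+1}(G[W])` and `2m - 1` for relative complexes of level `m`.
-/

def ContainsIndepSet (G : SimpleGraph V) (s : Finset V) (k : ℕ) : Prop :=
  ∃ I ⊆ s, I.card = k ∧ IsIndepSet G I

section IndepSets

variable {G : SimpleGraph V} {s t : Finset V} {k l : ℕ}

theorem ContainsIndepSet.mono (hst : s ⊆ t) :
    ContainsIndepSet G s k → ContainsIndepSet G t k :=
  fun ⟨I, hI, hcard, hind⟩ => ⟨I, hI.trans hst, hcard, hind⟩

theorem ContainsIndepSet.of_le (hkl : k ≤ l) :
    ContainsIndepSet G s l → ContainsIndepSet G s k := by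
  rintro ⟨I, hI, rfl, hind⟩
  obtain ⟨J, hJ, hJcard⟩ := exists_subset_card_eq hkl
  exact ⟨J, hJ.trans hI, hJcard, fun u hu v hv => hind u (hJ hu) v (hJ hv)⟩

theorem containsIndepSet_zero : ContainsIndepSet G s 0 :=
  ⟨∅, empty_subset s, card_empty, by simp [IsIndepSet]⟩

theorem not_containsIndepSet_empty : ¬ ContainsIndepSet G ∅ (k + 1) := by
  rintro ⟨I, hI, hcard, -⟩
  simp [subset_empty.1 hI] at hcard

variable [Fintype V]

theorem mem_nbrsFinset {u v : V} : u ∈ nbrsFinset G v ↔ G.Adj v u := by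
  simp [nbrsFinset]

variable [DecidableEq V]

theorem containsIndepSet_insert {v : V} (hv : v ∉ s) :
    ContainsIndepSet G (insert v s) (k + 1) ↔
      ContainsIndepSet G s (k + 1) ∨ ContainsIndepSet G (s \ nbrsFinset G v) k := by
  constructor
  · rintro ⟨I, hI, hcard, hind⟩
    by_cases hvI : v ∈ I
    · refine Or.inr ⟨I.erase v, fun a ha => ?_, by simp [card_erase_of_mem hvI, hcard],
        fun a ha b hb => hind a (mem_of_mem_erase ha) b (mem_of_mem_erase hb)⟩
      have haI := mem_of_mem_erase ha
      rw [mem_sdiff, mem_nbrsFinset]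
      exact ⟨(mem_insert.1 (hI haI)).resolve_left (ne_of_mem_erase ha), hind v hvI a haI⟩
    · exact Or.inl ⟨I, (subset_insert_iff_of_notMem hvI).1 hI, hcard, hind⟩
  · rintro (h | ⟨I, hI, rfl, hind⟩)
    · exact h.mono (subset_insert v s)
    · have hIs : I ⊆ s := hI.trans sdiff_subset
      have hnadj : ∀ a ∈ I, ¬ G.Adj v a :=
        fun a ha hva => (mem_sdiff.1 (hI ha)).2 (mem_nbrsFinset.2 hva)
      refine ⟨insert v I, insert_subset_insert v hIs,
        card_insert_of_notMem fun h => hv (hIs h), ?_⟩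
      intro a ha b hb
      rcases mem_insert.1 ha with rfl | ha'
      · rcases mem_insert.1 hb with rfl | hb'
        · exact G.irrefl
        · exact hnadj b hb'
      · rcases mem_insert.1 hb with rfl | hb'
        · exact fun h => hnadj a ha' h.symm
        · exact hind a ha' b hb'

end IndepSets

section Collapsing

variable [DecidableEq V] {X L L' D : Finset (Finset V)} {η : Finset V} {v : V} {d d' : ℕ}

theorem ElemCollapse.mono (hdd' : d ≤ d') (h : ElemCollapse d X L) : ElemCollapse d' X L := by
  obtain ⟨σ, τ, hfree, hcard, rfl⟩ := h
  exact ⟨σ, τ, hfree, hcard.trans hdd', rfl⟩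

theorem ElemCollapse.subset (h : ElemCollapse d X L) : L ⊆ X := by
  obtain ⟨σ, τ, -, -, rfl⟩ := h
  exact filter_subset _ _

theorem Collapsible.mono (hdd' : d ≤ d') (h : Collapsible d X) : Collapsible d' X :=
  Relation.ReflTransGen.mono (fun _ _ => ElemCollapse.mono hdd') _ _ h

theorem collapsible_empty : Collapsible d (∅ : Finset (Finset V)) :=
  Relation.ReflTransGen.refl

theorem collapsible_singleton_empty : Collapsible d ({∅} : Finset (Finset V)) :=
  Relation.ReflTransGen.single ⟨∅, ∅, ⟨mem_singleton_self ∅, mem_singleton_self ∅,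
    subset_rfl, fun η hη _ => (mem_singleton.1 hη).le⟩, by simp, by simp [filter_singleton]⟩

theorem reflTransGen_map_of_invariant {α β : Type*} {r : α → α → Prop}
    {p : β → β → Prop} {P : α → Prop} (f : α → β) (hP : ∀ a b, r a b → P a → P b)
    (hf : ∀ a b, r a b → P a → p (f a) (f b)) {a b : α} (hab : Relation.ReflTransGen r a b)
    (ha : P a) : Relation.ReflTransGen p (f a) (f b) := by
  induction hab using Relation.ReflTransGen.head_induction_on with
  | refl => exact .refl
  | head hac _ ih => exact .head (hf _ _ hac ha) (ih (hP _ _ hac ha))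

theorem ElemCollapse.union_image_insert (hD : ∀ σ ∈ D, v ∉ σ) (hL : ∀ σ ∈ L, v ∉ σ)
    (h : ElemCollapse d L L') :
    ElemCollapse (d + 1) (D ∪ L.image (insert v)) (D ∪ L'.image (insert v)) := by
  obtain ⟨σ, τ, ⟨hσ, hτ, hστ, hmax⟩, hcard, rfl⟩ := h
  have hvσ := hL σ hσ
  refine ⟨insert v σ, insert v τ, ⟨mem_union_right _ (mem_image_of_mem _ hσ),
    mem_union_right _ (mem_image_of_mem _ hτ), insert_subset_insert v hστ, ?_⟩,
    (card_insert_le v σ).trans (by omega), ?_⟩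
  · intro η hη hση
    rcases mem_union.1 hη with hη | hη
    · exact absurd (hση (mem_insert_self v σ)) (hD η hη)
    · obtain ⟨η₀, hη₀, rfl⟩ := mem_image.1 hη
      exact insert_subset_insert v (hmax η₀ hη₀ ((insert_subset_insert_iff hvσ).1 hση))
  · rw [filter_union, filter_image,
      filter_true_of_mem (p := fun η => ¬(insert v σ ⊆ η ∧ η ⊆ insert v τ))
        fun η hη h => hD η hη (h.1 (mem_insert_self v σ))]
    congr 2
    refine filter_congr fun η hη => ?_
    rw [insert_subset_insert_iff hvσ, insert_subset_insert_iff (hL η hη)]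

theorem ElemCollapse.union_image_insert_self (hL : ∀ σ ∈ L, v ∉ σ)
    (h : ElemCollapse d L L') :
    ElemCollapse d (L ∪ L.image (insert v)) (L' ∪ L'.image (insert v)) := by
  obtain ⟨σ, τ, ⟨hσ, hτ, hστ, hmax⟩, hcard, rfl⟩ := h
  have hvσ := hL σ hσ
  refine ⟨σ, insert v τ, ⟨mem_union_left _ hσ, mem_union_right _ (mem_image_of_mem _ hτ),
    hστ.trans (subset_insert v τ), ?_⟩, hcard, ?_⟩
  · intro η hη hση
    rcases mem_union.1 hη with hη | hη
    · exact (hmax η hη hση).trans (subset_insert v τ)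
    · obtain ⟨η₀, hη₀, rfl⟩ := mem_image.1 hη
      exact insert_subset_insert v (hmax η₀ hη₀ ((subset_insert_iff_of_notMem hvσ).1 hση))
  · rw [filter_union, filter_image]
    congr 1
    · exact filter_congr fun η hη => by rw [subset_insert_iff_of_notMem (hL η hη)]
    · congr 1
      exact filter_congr fun η hη => by
        rw [subset_insert_iff_of_notMem hvσ, insert_subset_insert_iff (hL η hη)]

theorem reflTransGen_union_image_insert (hD : ∀ σ ∈ D, v ∉ σ) (hL : ∀ σ ∈ L, v ∉ σ)
    (h : Collapsible d L) :
    Relation.ReflTransGen (ElemCollapse (d + 1)) (D ∪ L.image (insert v)) D := by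
  simpa using reflTransGen_map_of_invariant (fun L => D ∪ L.image (insert v))
    (P := fun L => ∀ σ ∈ L, v ∉ σ) (fun _ _ h hL σ hσ => hL σ (h.subset hσ))
    (fun _ _ h hL => h.union_image_insert hD hL) h hL

theorem collapsible_union_image_insert (hL : ∀ σ ∈ L, v ∉ σ) (h : Collapsible d L) :
    Collapsible d (L ∪ L.image (insert v)) := by
  show Relation.ReflTransGen _ _ ∅
  simpa using reflTransGen_map_of_invariant (fun L => L ∪ L.image (insert v))
    (P := fun L => ∀ σ ∈ L, v ∉ σ) (fun _ _ h hL σ hσ => hL σ (h.subset hσ))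
    (fun _ _ h hL => h.union_image_insert_self hL) h hL

theorem mem_link_singleton : η ∈ link X {v} ↔ η ∈ X ∧ v ∉ η ∧ insert v η ∈ X := by
  rw [link, mem_filter, ← disjoint_iff_inter_eq_empty, disjoint_singleton_right,
    union_singleton]

theorem mem_deleteVert : η ∈ deleteVert X v ↔ η ∈ X ∧ v ∉ η := mem_filter

theorem IsSimplicialComplex.inter {Y : Finset (Finset V)} (hX : IsSimplicialComplex X)
    (hY : IsSimplicialComplex Y) : IsSimplicialComplex (X ∩ Y) := fun σ hσ τ hτ =>
  mem_inter.2 ⟨hX σ (mem_inter.1 hσ).1 τ hτ, hY σ (mem_inter.1 hσ).2 τ hτ⟩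

theorem IsSimplicialComplex.eq_deleteVert_union_link (hX : IsSimplicialComplex X) (v : V) :
    X = deleteVert X v ∪ (link X {v}).image (insert v) := by
  ext η
  simp only [mem_union, mem_deleteVert, mem_image, mem_link_singleton]
  constructor
  · intro hη
    by_cases hv : v ∈ η
    · exact Or.inr ⟨η.erase v, ⟨hX η hη _ (erase_subset v η), notMem_erase v η,
        by rwa [insert_erase hv]⟩, insert_erase hv⟩
    · exact Or.inl ⟨hη, hv⟩
  · rintro (⟨hη, -⟩ | ⟨η₀, ⟨-, -, hη₀⟩, rfl⟩)
    · exact hη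
    · exact hη₀

theorem IsSimplicialComplex.collapsible_of_link_of_deleteVert (hX : IsSimplicialComplex X)
    (hlink : Collapsible d (link X {v})) (hdel : Collapsible (d + 1) (deleteVert X v)) :
    Collapsible (d + 1) X := by
  rw [hX.eq_deleteVert_union_link v]
  exact (reflTransGen_union_image_insert (fun σ hσ => (mem_deleteVert.1 hσ).2)
    (fun σ hσ => (mem_link_singleton.1 hσ).2.1) hlink).trans hdel

theorem IsSimplicialComplex.collapsible_of_link_eq_deleteVert (hX : IsSimplicialComplex X)
    (hcone : link X {v} = deleteVert X v) (hlink : Collapsible d (link X {v})) :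
    Collapsible d X := by
  rw [hX.eq_deleteVert_union_link v, ← hcone]
  exact collapsible_union_image_insert (fun σ hσ => (mem_link_singleton.1 hσ).2.1) hlink

end Collapsing

section Complexes

variable {G : SimpleGraph V} {W : Finset V} {η : Finset V} {m : ℕ}

theorem mem_indComplexOn {n : ℕ} :
    η ∈ indComplexOn G W n ↔ η ⊆ W ∧ ¬ ContainsIndepSet G η n := by
  unfold indComplexOn
  rw [@mem_filter _ _ (Classical.decPred _), mem_powerset]
  rfl

theorem isSimplicialComplex_indComplexOn {n : ℕ} : IsSimplicialComplex (indComplexOn G W n) :=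
  fun σ hσ τ hτ => by
    rw [mem_indComplexOn] at hσ ⊢
    exact ⟨hτ.trans hσ.1, fun h => hσ.2 (h.mono hτ)⟩

theorem indComplexOn_empty : indComplexOn G ∅ (m + 1) = {∅} := by
  ext η
  rw [mem_indComplexOn, subset_empty, mem_singleton]
  constructor
  · exact And.left
  · rintro rfl
    exact ⟨rfl, not_containsIndepSet_empty⟩

variable [DecidableEq V] {S T A : Finset V} {y : V}

noncomputable def indComplexRel (G : SimpleGraph V) (W : Finset V) (m : ℕ) (S : Finset V) :
    Finset (Finset V) :=
  @Finset.filter _ (fun η => ¬ ContainsIndepSet G η (m + 1) ∧ ¬ ContainsIndepSet G (η \ S) m)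
    (Classical.decPred _) W.powerset

theorem mem_indComplexRel :
    η ∈ indComplexRel G W m S ↔
      η ⊆ W ∧ ¬ ContainsIndepSet G η (m + 1) ∧ ¬ ContainsIndepSet G (η \ S) m := by
  unfold indComplexRel
  rw [@mem_filter _ _ (Classical.decPred _), mem_powerset]

theorem isSimplicialComplex_indComplexRel : IsSimplicialComplex (indComplexRel G W m S) :=
  fun σ hσ τ hτ => by
    rw [mem_indComplexRel] at hσ ⊢
    exact ⟨hτ.trans hσ.1, fun h => hσ.2.1 (h.mono hτ),
      fun h => hσ.2.2 (h.mono (sdiff_subset_sdiff hτ subset_rfl))⟩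

theorem indComplexRel_zero : indComplexRel G W 0 S = ∅ :=
  eq_empty_of_forall_notMem fun _ h => (mem_indComplexRel.1 h).2.2 containsIndepSet_zero

theorem indComplexRel_congr (h : S ∩ W = T ∩ W) :
    indComplexRel G W m S = indComplexRel G W m T := by
  ext η
  simp only [mem_indComplexRel, and_congr_right_iff]
  intro hη
  suffices η \ S = η \ T by simp [this]
  ext a
  simp only [mem_sdiff, and_congr_right_iff]
  intro ha
  have := congrArg (a ∈ ·) h
  simp only [mem_inter, hη ha, and_true] at this
  rw [this]

theorem indComplexRel_of_disjoint (h : Disjoint S W) :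
    indComplexRel G W m S = indComplexOn G W m := by
  ext η
  rw [mem_indComplexRel, mem_indComplexOn]
  constructor
  · rintro ⟨hη, -, h'⟩
    rw [sdiff_eq_self_of_disjoint (h.symm.mono_left hη)] at h'
    exact ⟨hη, h'⟩
  · rintro ⟨hη, h'⟩
    rw [sdiff_eq_self_of_disjoint (h.symm.mono_left hη)]
    exact ⟨hη, fun h => h' (h.of_le m.le_succ), h'⟩

theorem indComplexRel_inter_of_subset (h : T ∩ W ⊆ A) :
    indComplexRel G W m A ∩ indComplexRel G W m T = indComplexRel G W m T := by
  refine inter_eq_right.2 fun η hη => ?_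
  rw [mem_indComplexRel] at hη ⊢
  refine ⟨hη.1, hη.2.1, fun hA => hη.2.2 (hA.mono fun a ha => ?_)⟩
  rw [mem_sdiff] at ha ⊢
  exact ⟨ha.1, fun haT => ha.2 (h (mem_inter.2 ⟨haT, hη.1 ha.1⟩))⟩

theorem deleteVert_indComplexOn {n : ℕ} {v : V} :
    deleteVert (indComplexOn G W n) v = indComplexOn G (W.erase v) n := by
  ext η
  rw [mem_deleteVert, mem_indComplexOn, mem_indComplexOn, subset_erase]
  tauto

theorem deleteVert_indComplexRel {v : V} :
    deleteVert (indComplexRel G W m S) v = indComplexRel G (W.erase v) m S := by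
  ext η
  rw [mem_deleteVert, mem_indComplexRel, mem_indComplexRel, subset_erase]
  tauto

theorem deleteVert_indComplexRel_inter_singleton :
    deleteVert (indComplexRel G W (m + 1) A ∩ indComplexRel G W (m + 1) {y}) y =
      indComplexOn G (W.erase y) (m + 1) := by
  ext η
  rw [mem_deleteVert, mem_inter, mem_indComplexRel, mem_indComplexRel, mem_indComplexOn,
    subset_erase]
  by_cases hyη : y ∈ η
  · simp [hyη]
  rw [sdiff_singleton_eq_erase, erase_eq_of_notMem hyη]
  have h₁ : ContainsIndepSet G η (m + 1 + 1) → ContainsIndepSet G η (m + 1) :=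
    (·.of_le (by omega))
  have h₂ : ContainsIndepSet G (η \ A) (m + 1) → ContainsIndepSet G η (m + 1) :=
    (·.mono sdiff_subset)
  tauto

theorem IsSimplicialComplex.collapsible_of_link_eq_indComplexRel {X : Finset (Finset V)} {v : V}
    (hX : IsSimplicialComplex X)
    (hlink : link X {v} = indComplexRel G W m S)
    (hrel : Collapsible (2 * m - 1) (indComplexRel G W m S))
    (hdel : Collapsible (2 * m) (deleteVert X v)) : Collapsible (2 * m) X := by
  -- `2 * 0 - 1 = 0`, so at level `0` the bound comes from the link being void
  cases m with
  | zero =>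
    rw [hX.eq_deleteVert_union_link v, hlink, indComplexRel_zero, image_empty, union_empty]
    exact hdel
  | succ m =>
    rw [← hlink] at hrel
    exact hX.collapsible_of_link_of_deleteVert hrel (hdel.mono (by omega)) |>.mono (by omega)

end Complexes

section Links

variable [DecidableEq V] [Fintype V] {G : SimpleGraph V} {W S A : Finset V} {m : ℕ} {v : V}

theorem link_indComplexOn (hv : v ∈ W) :
    link (indComplexOn G W (m + 1)) {v} = indComplexRel G (W.erase v) m (nbrsFinset G v) := by
  ext η
  rw [mem_link_singleton, mem_indComplexOn, mem_indComplexOn, mem_indComplexRel, subset_erase,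
    insert_subset_iff]
  by_cases hvη : v ∈ η
  · simp [hvη]
  rw [containsIndepSet_insert hvη]
  tauto

theorem link_indComplexRel (hvW : v ∈ W) (hvS : v ∈ S) :
    link (indComplexRel G W m S) {v} =
      indComplexRel G (W.erase v) m (nbrsFinset G v) ∩ indComplexRel G (W.erase v) m S := by
  ext η
  rw [mem_link_singleton, mem_inter, mem_indComplexRel, mem_indComplexRel, mem_indComplexRel,
    mem_indComplexRel, subset_erase, insert_subset_iff, insert_sdiff_of_mem η hvS]
  by_cases hvη : v ∈ η
  · simp [hvη]
  rw [containsIndepSet_insert hvη]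
  tauto

theorem link_indComplexRel_inter_singleton (hv : v ∈ W) (hvA : v ∉ A) :
    link (indComplexRel G W (m + 1) A ∩ indComplexRel G W (m + 1) {v}) {v} =
      indComplexRel G (W.erase v) m (A ∪ nbrsFinset G v) := by
  ext η
  rw [mem_link_singleton, mem_inter, mem_inter, mem_indComplexRel, mem_indComplexRel,
    mem_indComplexRel, mem_indComplexRel, mem_indComplexRel, subset_erase, insert_subset_iff]
  by_cases hvη : v ∈ η
  · simp [hvη]
  have hvηA : v ∉ η \ A := fun h => hvη (mem_sdiff.1 h).1
  rw [insert_sdiff_of_mem η (mem_singleton_self v), sdiff_singleton_eq_erase,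
    erase_eq_of_notMem hvη, insert_sdiff_of_notMem η hvA,
    containsIndepSet_insert hvη, containsIndepSet_insert hvηA,
    sdiff_sdiff_left, sup_eq_union]
  -- all the other conditions follow from `¬ ContainsIndepSet G η (m + 1)`
  have h₁ : ContainsIndepSet G η (m + 1 + 1) → ContainsIndepSet G η (m + 1) :=
    (·.of_le (by omega))
  have h₂ : ContainsIndepSet G (η \ A) (m + 1) → ContainsIndepSet G η (m + 1) :=
    (·.mono sdiff_subset)
  have h₃ : ContainsIndepSet G (η \ nbrsFinset G v) (m + 1) → ContainsIndepSet G η (m + 1) :=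
    (·.mono sdiff_subset)
  tauto

end Links

section MaxDegreeTwo

variable [Fintype V] {G : SimpleGraph V}

theorem card_nbrsFinset_le_two (hΔ : MaxDegLE G 2) (v : V) : (nbrsFinset G v).card ≤ 2 := by
  have : (nbrsFinset G v : Set V) = G.neighborSet v := by
    ext u
    simp [mem_nbrsFinset]
  rw [← Set.ncard_coe_finset, this]
  exact hΔ v

variable [DecidableEq V]

theorem card_nbrsFinset_inter_le_one (hΔ : MaxDegLE G 2) {W : Finset V} {a b : V}
    (hab : G.Adj a b) (hb : b ∉ W) : (nbrsFinset G a ∩ W).card ≤ 1 := by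
  have hsub : nbrsFinset G a ∩ W ⊆ (nbrsFinset G a).erase b := fun u hu =>
    mem_erase.2 ⟨fun h => hb (h ▸ (mem_inter.1 hu).2), (mem_inter.1 hu).1⟩
  have := card_le_card hsub
  rw [card_erase_of_mem (mem_nbrsFinset.2 hab)] at this
  have := card_nbrsFinset_le_two hΔ a
  omega

def IsLight (G : SimpleGraph V) (W S : Finset V) : Prop :=
  (S ∩ W).card ≤ 2 ∧ ∀ s ∈ S, (nbrsFinset G s ∩ W).card ≤ 1

theorem IsLight.mono {W W' S : Finset V} (h : IsLight G W S) (hW : W' ⊆ W) :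
    IsLight G W' S :=
  ⟨(card_le_card (inter_subset_inter_left hW)).trans h.1,
    fun s hs => (card_le_card (inter_subset_inter_left hW)).trans (h.2 s hs)⟩

theorem collapsible_indComplexOn (hΔ : MaxDegLE G 2) {m : ℕ}
    (hrel : ∀ W S, IsLight G W S → Collapsible (2 * m - 1) (indComplexRel G W m S))
    (W : Finset V) : Collapsible (2 * m) (indComplexOn G W (m + 1)) := by
  induction W using Finset.strongInduction with
  | _ W ih =>
  rcases W.eq_empty_or_nonempty with rfl | ⟨v, hv⟩
  · rw [indComplexOn_empty]
    exact collapsible_singleton_empty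
  refine isSimplicialComplex_indComplexOn.collapsible_of_link_eq_indComplexRel
    (link_indComplexOn hv) (hrel _ _ ⟨?_, fun s hs => ?_⟩) ?_
  · exact (card_le_card inter_subset_left).trans (card_nbrsFinset_le_two hΔ v)
  · exact card_nbrsFinset_inter_le_one hΔ (mem_nbrsFinset.1 hs).symm (notMem_erase v W)
  · rw [deleteVert_indComplexOn]
    exact ih _ (erase_ssubset hv)

theorem collapsible_indComplexRel_nbrsFinset_inter_singleton (hΔ : MaxDegLE G 2) {m : ℕ}
    (hind : ∀ W, Collapsible (2 * m) (indComplexOn G W (m + 1)))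
    (hrel : ∀ W S, IsLight G W S → Collapsible (2 * m - 1) (indComplexRel G W m S))
    {W : Finset V} {x y : V} (hx : x ∉ W) (hy : y ∈ W) (hxy : ¬ G.Adj x y)
    (hxW : (nbrsFinset G x ∩ W).card ≤ 1) (hyW : (nbrsFinset G y ∩ W).card ≤ 1) :
    Collapsible (2 * m)
      (indComplexRel G W (m + 1) (nbrsFinset G x) ∩ indComplexRel G W (m + 1) {y}) := by
  refine (isSimplicialComplex_indComplexRel.inter isSimplicialComplex_indComplexRel)
    |>.collapsible_of_link_eq_indComplexRel
      (link_indComplexRel_inter_singleton hy (mt mem_nbrsFinset.1 hxy)) (hrel _ _ ⟨?_, ?_⟩) ?_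
  · have hsub {s : Finset V} : s ∩ W.erase y ⊆ s ∩ W :=
      inter_subset_inter_left (erase_subset y W)
    rw [union_inter_distrib_right]
    exact (card_union_le _ _).trans (by grw [card_le_card hsub, card_le_card hsub]; omega)
  · intro s hs
    rcases mem_union.1 hs with hs | hs
    · exact card_nbrsFinset_inter_le_one hΔ (mem_nbrsFinset.1 hs).symm
        fun h => hx (mem_of_mem_erase h)
    · exact card_nbrsFinset_inter_le_one hΔ (mem_nbrsFinset.1 hs).symm (notMem_erase y W)
  · rw [deleteVert_indComplexRel_inter_singleton]
    exact hind _

theorem collapsible_indComplexRel_succ (hΔ : MaxDegLE G 2) {m : ℕ}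
    (hind : ∀ W, Collapsible (2 * m) (indComplexOn G W (m + 1)))
    (hrel : ∀ W S, IsLight G W S → Collapsible (2 * m - 1) (indComplexRel G W m S))
    (W S : Finset V) (hS : IsLight G W S) :
    Collapsible (2 * (m + 1) - 1) (indComplexRel G W (m + 1) S) := by
  induction W using Finset.strongInduction generalizing S with
  | _ W ih =>
  rcases (S ∩ W).eq_empty_or_nonempty with hSW | ⟨x, hx⟩
  · rw [indComplexRel_of_disjoint (disjoint_iff_inter_eq_empty.2 hSW)]
    exact (hind W).mono (by omega)
  obtain ⟨hxS, hxW⟩ := mem_inter.1 hx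
  have hX : IsSimplicialComplex (indComplexRel G W (m + 1) S) := isSimplicialComplex_indComplexRel
  have hdel : Collapsible (2 * (m + 1) - 1) (deleteVert (indComplexRel G W (m + 1) S) x) := by
    rw [deleteVert_indComplexRel]
    exact ih _ (erase_ssubset hxW) S (hS.mono (erase_subset x W))
  by_cases hcone : S ∩ W.erase x ⊆ nbrsFinset G x
  · have hlink : link (indComplexRel G W (m + 1) S) {x} =
        deleteVert (indComplexRel G W (m + 1) S) x := by
      rw [link_indComplexRel hxW hxS, deleteVert_indComplexRel,
        indComplexRel_inter_of_subset hcone]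
    exact hX.collapsible_of_link_eq_deleteVert hlink (hlink ▸ hdel)
  obtain ⟨y, hy, hxy⟩ := not_subset.1 hcone
  obtain ⟨hyS, hyW⟩ := mem_inter.1 hy
  have hSy : S ∩ W.erase x = {y} ∩ W.erase x := by
    have hne : x ≠ y := fun h => notMem_erase x W (h ▸ hyW)
    have hpair : S ∩ W = {x, y} := (eq_of_subset_of_card_le
      (insert_subset hx (singleton_subset_iff.2 (mem_inter.2 ⟨hyS, mem_of_mem_erase hyW⟩)))
      (by rw [card_pair hne]; exact hS.1)).symm
    rw [inter_erase, hpair, singleton_inter_of_mem hyW, erase_insert (notMem_singleton.2 hne)]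
  have hlink : Collapsible (2 * m) (link (indComplexRel G W (m + 1) S) {x}) := by
    have hS' := hS.mono (erase_subset x W)
    rw [link_indComplexRel hxW hxS, indComplexRel_congr hSy]
    exact collapsible_indComplexRel_nbrsFinset_inter_singleton hΔ hind hrel (notMem_erase x W)
      hyW (mt mem_nbrsFinset.2 hxy) (hS'.2 x hxS) (hS'.2 y hyS)
  exact hX.collapsible_of_link_of_deleteVert hlink (hdel.mono (by omega)) |>.mono (by omega)

theorem collapsible_indComplexRel (hΔ : MaxDegLE G 2) (m : ℕ) :
    ∀ W S, IsLight G W S → Collapsible (2 * m - 1) (indComplexRel G W m S) := by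
  induction m with
  | zero =>
    intro W S _
    rw [indComplexRel_zero]
    exact collapsible_empty
  | succ m ih => exact collapsible_indComplexRel_succ hΔ (collapsible_indComplexOn hΔ ih) ih

end MaxDegreeTwo

/-- If `G` has maximum degree at most `2` then
`C(I_n(G)) ≤ 2 (n - 1)`. -/
theorem collapseNum_indComplex_le_of_maxDeg_two {V : Type*} [DecidableEq V] [Fintype V]
    (G : SimpleGraph V) (hΔ : MaxDegLE G 2) (n : ℕ) (hn : 1 ≤ n) :
    collapseNum (indComplex G n) ≤ 2 * (n - 1) := by
  obtain ⟨m, rfl⟩ := Nat.exists_eq_add_of_le' hn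
  have h : Collapsible (2 * m) (indComplex G (m + 1)) :=
    collapsible_indComplexOn hΔ (collapsible_indComplexRel hΔ m) univ
  simpa [collapseNum] using Nat.sInf_le h

end PaperKL
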